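/- arXiv:2402.11328 — 5 statements merged into one kernel-verified Lean document; each statement's English description precedes it below -/
import Mathlib

section
/- With the notation of the weight lifting polytope construction, if additionally e = 0, then for every positive integer t the weight lifting polytope of the dilate tP (with right-hand side tb) equals the dilate t(P*), and consequently Σ_{x ∈ tP ∩ ℤ^n} w(x) = #(t P* ∩ ℤ^{n+m}) for all t ∈ ℕ. -/
open Pointwise
/-- **Theorem 1(2)**: when `e = 0` the weight lifting construction is parametric:
for every positive integer `t`, the weight lifting polytope of the dilate `tP`
(with right-hand side `t·b`) equals the dilate `t·(P*)` (as subsets of `ℝ^{n+m}`),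
and consequently the `w`-weighted count of lattice points of `tP` equals the
number of lattice points of `t·P*`, for every natural number `t`. -/
theorem weight_lifting_polytope_dilate (s n r m : ℕ)
    (A : Matrix (Fin s) (Fin n) ℤ) (b : Fin s → ℤ)
    (C : Matrix (Fin r) (Fin m) ℤ) (d : Fin n → Fin r → ℤ)
    (hP : ∀ t : ℕ, {x : Fin n → ℤ | A.mulVec x = t • b ∧ ∀ i, 0 ≤ x i}.Finite)
    (hQ : ∀ x : Fin n → ℤ,
      {y : Fin m → ℤ | C.mulVec y = ∑ i, x i • d i ∧ ∀ j, 0 ≤ y j}.Finite) :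
    (∀ t : ℕ, 0 < t →
      {p : (Fin n → ℝ) × (Fin m → ℝ) |
          (∀ i, ∑ j, (A i j : ℝ) * p.1 j = t * b i) ∧
          (∀ k, ∑ i, p.1 i * (d i k : ℝ) = ∑ j, (C k j : ℝ) * p.2 j) ∧
          (∀ i, 0 ≤ p.1 i) ∧ (∀ j, 0 ≤ p.2 j)}
        = (t : ℝ) • {p : (Fin n → ℝ) × (Fin m → ℝ) |
          (∀ i, ∑ j, (A i j : ℝ) * p.1 j = b i) ∧
          (∀ k, ∑ i, p.1 i * (d i k : ℝ) = ∑ j, (C k j : ℝ) * p.2 j) ∧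
          (∀ i, 0 ≤ p.1 i) ∧ (∀ j, 0 ≤ p.2 j)}) ∧
    (∀ t : ℕ,
      (∑ᶠ x ∈ {x : Fin n → ℤ | A.mulVec x = t • b ∧ ∀ i, 0 ≤ x i},
          {y : Fin m → ℤ | C.mulVec y = ∑ i, x i • d i ∧ ∀ j, 0 ≤ y j}.ncard)
        = {p : (Fin n → ℤ) × (Fin m → ℤ) |
            A.mulVec p.1 = t • b ∧ (∑ i, p.1 i • d i) = C.mulVec p.2 ∧
            (∀ i, 0 ≤ p.1 i) ∧ (∀ j, 0 ≤ p.2 j)}.ncard) := by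
  classical
  constructor
  · intro t ht
    have htR : (0:ℝ) < (t : ℝ) := by exact_mod_cast ht
    have htR' : (t : ℝ) ≠ 0 := htR.ne'
    ext p
    rw [Set.mem_smul_set_iff_inv_smul_mem₀ htR']
    have h1 : ∀ j, ((t:ℝ)⁻¹ • p).1 j = (t:ℝ)⁻¹ * p.1 j := fun j => rfl
    have h2 : ∀ j, ((t:ℝ)⁻¹ • p).2 j = (t:ℝ)⁻¹ * p.2 j := fun j => rfl
    simp only [Set.mem_setOf_eq, h1, h2]
    constructor
    · rintro ⟨hA, hC, hx, hy⟩
      refine ⟨fun i => ?_, fun k => ?_, fun i => ?_, fun j => ?_⟩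
      · rw [Finset.sum_congr rfl (fun j _ => by ring : ∀ j ∈ Finset.univ,
          (A i j : ℝ) * ((t:ℝ)⁻¹ * p.1 j) = (t:ℝ)⁻¹ * ((A i j : ℝ) * p.1 j)),
          ← Finset.mul_sum, hA i]
        field_simp
      · rw [Finset.sum_congr rfl (fun i _ => by ring : ∀ i ∈ Finset.univ,
          (t:ℝ)⁻¹ * p.1 i * (d i k : ℝ) = (t:ℝ)⁻¹ * (p.1 i * (d i k : ℝ))),
          ← Finset.mul_sum, hC k,
          Finset.sum_congr rfl (fun j _ => by ring : ∀ j ∈ Finset.univ,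
          (C k j : ℝ) * ((t:ℝ)⁻¹ * p.2 j) = (t:ℝ)⁻¹ * ((C k j : ℝ) * p.2 j)),
          ← Finset.mul_sum]
      · exact mul_nonneg (by positivity) (hx i)
      · exact mul_nonneg (by positivity) (hy j)
    · rintro ⟨hA, hC, hx, hy⟩
      refine ⟨fun i => ?_, fun k => ?_, fun i => ?_, fun j => ?_⟩
      · have := hA i
        rw [Finset.sum_congr rfl (fun j _ => by ring : ∀ j ∈ Finset.univ,
          (A i j : ℝ) * ((t:ℝ)⁻¹ * p.1 j) = (t:ℝ)⁻¹ * ((A i j : ℝ) * p.1 j)),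
          ← Finset.mul_sum] at this
        field_simp at this
        linarith
      · have := hC k
        rw [Finset.sum_congr rfl (fun i _ => by ring : ∀ i ∈ Finset.univ,
          (t:ℝ)⁻¹ * p.1 i * (d i k : ℝ) = (t:ℝ)⁻¹ * (p.1 i * (d i k : ℝ))),
          ← Finset.mul_sum,
          Finset.sum_congr rfl (fun j _ => by ring : ∀ j ∈ Finset.univ,
          (C k j : ℝ) * ((t:ℝ)⁻¹ * p.2 j) = (t:ℝ)⁻¹ * ((C k j : ℝ) * p.2 j)),
          ← Finset.mul_sum] at this
        exact mul_left_cancel₀ (inv_ne_zero htR') this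
      · have h := mul_nonneg htR.le (hx i)
        rwa [← mul_assoc, mul_inv_cancel₀ htR', one_mul] at h
      · have h := mul_nonneg htR.le (hy j)
        rwa [← mul_assoc, mul_inv_cancel₀ htR', one_mul] at h
  · intro t
    set Pt := {x : Fin n → ℤ | A.mulVec x = t • b ∧ ∀ i, 0 ≤ x i} with hPtdef
    set Qs : (Fin n → ℤ) → Set (Fin m → ℤ) :=
      fun x => {y | C.mulVec y = ∑ i, x i • d i ∧ ∀ j, 0 ≤ y j} with hQdef
    have hPt := hP t
    let F : Finset (Fin n → ℤ) := hPt.toFinset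
    let G : (Fin n → ℤ) → Finset (Fin m → ℤ) := fun x => (hQ x).toFinset
    have hLHS : (∑ᶠ x ∈ Pt, (Qs x).ncard) = ∑ x ∈ F, (G x).card := by
      have hcoe : Pt = ↑F := (hPtdef.trans hPt.coe_toFinset.symm)
      rw [hcoe, finsum_mem_coe_finset]
      exact Finset.sum_congr rfl fun x _ => Set.ncard_eq_toFinset_card _ (hQ x)
    have key : {p : (Fin n → ℤ) × (Fin m → ℤ) |
            A.mulVec p.1 = t • b ∧ (∑ i, p.1 i • d i) = C.mulVec p.2 ∧
            (∀ i, 0 ≤ p.1 i) ∧ (∀ j, 0 ≤ p.2 j)}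
        = ↑(F.biUnion fun x => (G x).image (Prod.mk x)) := by
      ext ⟨x, y⟩
      simp only [Finset.coe_biUnion, Set.mem_iUnion, Finset.mem_coe,
        Finset.mem_biUnion, Finset.mem_image, Set.mem_setOf_eq,
        Set.Finite.mem_toFinset, F, G, Prod.mk.injEq, hPtdef, hQdef]
      constructor
      · rintro ⟨h1, h2, h3, h4⟩
        exact ⟨x, ⟨h1, h3⟩, y, ⟨h2.symm, h4⟩, rfl, rfl⟩
      · rintro ⟨x', ⟨h1, h3⟩, y', ⟨h2, h4⟩, rfl, rfl⟩
        exact ⟨h1, h2.symm, h3, h4⟩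
    rw [hLHS, key, Set.ncard_coe_finset, Finset.card_biUnion]
    · exact Finset.sum_congr rfl fun x _ =>
        (Finset.card_image_of_injective _ (fun a b h => congrArg Prod.snd (h : (x, a) = (x, b)))).symm
    · intro x _ x' _ hxx
      simp only [Finset.disjoint_left, Finset.mem_image]
      rintro p ⟨y, _, rfl⟩ ⟨y', _, h⟩
      exact hxx (congrArg Prod.fst h).symm
end

section
/- Let P = {x ∈ ℝ^n : Ax = b, x ≥ 0} be a rational polytope with integer data and α ∈ ℕ^n with each α_i ≥ 1. Then Σ_{x ∈ P ∩ ℤ^n} Π_i C(x_i, α_i - 1) equals the number of lattice points of the polytope P* ⊂ ℝ^{n+|α|} defined by Ax = b and, for each i, y_{i,1} + ... + y_{i,α_i} = x_i - (α_i - 1), with all coordinates nonnegative. -/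
/-- The standard stars-and-bars equivalence over `ℤ`. -/
def eqA (k m : ℕ) :
    {y : Fin k → ℤ // (∑ j, y j) = (m : ℤ) ∧ ∀ j, 0 ≤ y j}
      ≃ {P : Fin k → ℕ // ∑ i, P i = m} :=
  { toFun := fun y => ⟨fun j => (y.1 j).toNat, by
      have h := y.2.1
      have : ((∑ i, (y.1 i).toNat : ℕ) : ℤ) = (m : ℤ) := by
        push_cast
        rw [Finset.sum_congr rfl (fun j _ => Int.toNat_of_nonneg (y.2.2 j))]
        exact h
      exact_mod_cast this⟩
    invFun := fun P => ⟨fun j => (P.1 j : ℤ), by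
      constructor
      · simp only []; rw [← Nat.cast_sum, P.2]
      · intro j; positivity⟩
    left_inv := fun y => by
      ext j; simp [Int.toNat_of_nonneg (y.2.2 j)]
    right_inv := fun P => by ext j; simp }

lemma finC (k : ℕ) (c : ℤ) :
    Finite {y : Fin k → ℤ // (∑ j, y j) = c ∧ ∀ j, 0 ≤ y j} := by
  rcases le_or_gt 0 c with h | h
  · lift c to ℕ using h
    exact Finite.of_equiv _ ((Sym.equivNatSumOfFintype (Fin k) c).trans (eqA k c).symm)
  · have : IsEmpty {y : Fin k → ℤ // (∑ j, y j) = c ∧ ∀ j, 0 ≤ y j} := by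
      constructor
      rintro ⟨y, hy1, hy2⟩
      have : 0 ≤ ∑ j, y j := Finset.sum_nonneg fun j _ => hy2 j
      omega
    infer_instance

lemma countA (k m : ℕ) :
    Nat.card {y : Fin k → ℤ // (∑ j, y j) = (m : ℤ) ∧ ∀ j, 0 ≤ y j}
      = (m + k - 1).choose m := by
  rw [Nat.card_congr (eqA k m), Nat.card_congr (Sym.equivNatSumOfFintype (Fin k) m).symm,
    Nat.card_eq_fintype_card, Sym.card_sym_eq_choose]
  simp [Fintype.card_fin, Nat.add_comm]

lemma countB (k : ℕ) (hk : 0 < k) (x : ℤ) (hx : 0 ≤ x) :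
    Nat.card {y : Fin k → ℤ // (∑ j, y j) = x - ((k : ℤ) - 1) ∧ ∀ j, 0 ≤ y j}
      = x.toNat.choose (k - 1) := by
  rcases le_or_gt ((k : ℤ) - 1) x with h | h
  · set m := (x - ((k : ℤ) - 1)).toNat with hm
    have hxm : x - ((k : ℤ) - 1) = (m : ℤ) := by rw [hm, Int.toNat_of_nonneg]; omega
    rw [hxm, countA k m]
    have h1 : m + k - 1 = m + (k - 1) := by omega
    have h2 : x.toNat = m + (k - 1) := by omega
    rw [h1, h2]
    have := Nat.choose_symm (n := m + (k - 1)) (k := k - 1) (Nat.le_add_left _ _)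
    simpa using this
  · have hempty : IsEmpty {y : Fin k → ℤ // (∑ j, y j) = x - ((k : ℤ) - 1) ∧ ∀ j, 0 ≤ y j} := by
      constructor
      rintro ⟨y, hy1, hy2⟩
      have : 0 ≤ ∑ j, y j := Finset.sum_nonneg fun j _ => hy2 j
      omega
    rw [Nat.card_of_isEmpty]
    symm
    exact Nat.choose_eq_zero_of_lt (by omega)

/-- **Corollary (multichoose weights)**: for the weight
`w(x) = Π_i C(x_i, α_i - 1)`, the weighted sum of lattice points of
`P = {x : Ax = b, x ≥ 0}` equals the number of lattice points of the weight
lifting polytope `P* ⊂ ℝ^{n+|α|}` given by `Ax = b`,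
`Σ_j y_{i,j} = x_i - (α_i - 1)`, all coordinates nonnegative. -/
theorem weight_lifting_multichoose (s n : ℕ)
    (A : Matrix (Fin s) (Fin n) ℤ) (b : Fin s → ℤ)
    (α : Fin n → ℕ) (hα : ∀ i, 0 < α i)
    (hP : {x : Fin n → ℤ | A.mulVec x = b ∧ ∀ i, 0 ≤ x i}.Finite) :
    (∑ᶠ x ∈ {x : Fin n → ℤ | A.mulVec x = b ∧ ∀ i, 0 ≤ x i},
        ∏ i, Nat.choose (x i).toNat (α i - 1))
      = {p : (Fin n → ℤ) × (∀ i, Fin (α i) → ℤ) |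
          A.mulVec p.1 = b ∧ (∀ i, ∑ j, p.2 i j = p.1 i - ((α i : ℤ) - 1)) ∧
          (∀ i, 0 ≤ p.1 i) ∧ (∀ i j, 0 ≤ p.2 i j)}.ncard := by
  classical
  set Pset := {x : Fin n → ℤ | A.mulVec x = b ∧ ∀ i, 0 ≤ x i} with hPset
  let F : (Fin n → ℤ) → Type _ := fun x =>
    {y : ∀ i, Fin (α i) → ℤ //
      (∀ i, ∑ j, y i j = x i - ((α i : ℤ) - 1)) ∧ ∀ i j, 0 ≤ y i j}
  have eF : ∀ x : Fin n → ℤ, F x ≃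
      ∀ i, {y : Fin (α i) → ℤ // (∑ j, y j) = x i - ((α i : ℤ) - 1) ∧ ∀ j, 0 ≤ y j} :=
    fun x =>
    { toFun := fun y i => ⟨y.1 i, y.2.1 i, fun j => y.2.2 i j⟩
      invFun := fun y => ⟨fun i => (y i).1, fun i => (y i).2.1, fun i j => (y i).2.2 j⟩
      left_inv := fun y => rfl
      right_inv := fun y => rfl }
  haveI : ∀ (x : Fin n → ℤ) (i : Fin n),
      Finite {y : Fin (α i) → ℤ // (∑ j, y j) = x i - ((α i : ℤ) - 1) ∧ ∀ j, 0 ≤ y j} :=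
    fun x i => finC _ _
  haveI hFfin : ∀ x : Fin n → ℤ, Finite (F x) := fun x => Finite.of_equiv _ (eF x).symm
  haveI : Fintype ↥Pset := hP.fintype
  haveI : ∀ x : Fin n → ℤ, Fintype (F x) := fun x => Fintype.ofFinite _
  have eT : ↥{p : (Fin n → ℤ) × (∀ i, Fin (α i) → ℤ) |
          A.mulVec p.1 = b ∧ (∀ i, ∑ j, p.2 i j = p.1 i - ((α i : ℤ) - 1)) ∧
          (∀ i, 0 ≤ p.1 i) ∧ (∀ i j, 0 ≤ p.2 i j)} ≃ Σ x : ↥Pset, F x.1 :=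
    { toFun := fun p => ⟨⟨p.1.1, p.2.1, p.2.2.2.1⟩, ⟨p.1.2, p.2.2.1, p.2.2.2.2⟩⟩
      invFun := fun q => ⟨(q.1.1, q.2.1), q.1.2.1, q.2.2.1, q.1.2.2, q.2.2.2⟩
      left_inv := fun p => rfl
      right_inv := fun q => rfl }
  rw [← Nat.card_coe_set_eq, Nat.card_congr eT, Nat.card_eq_fintype_card,
    Fintype.card_sigma]
  have hL : (∑ᶠ x ∈ Pset, ∏ i, Nat.choose (x i).toNat (α i - 1))
      = ∑ x : ↥Pset, ∏ i, Nat.choose ((x : Fin n → ℤ) i).toNat (α i - 1) := by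
    rw [finsum_mem_eq_finite_toFinset_sum _ hP]
    exact Finset.sum_subtype hP.toFinset (fun x => hP.mem_toFinset) _
  rw [hL]
  refine Finset.sum_congr rfl fun x _ => ?_
  rw [← Nat.card_eq_fintype_card, Nat.card_congr (eF x.1), Nat.card_pi]
  exact Finset.prod_congr rfl fun i _ => (countB (α i) (hα i) (x.1 i) (x.2.2 i)).symm
end

section
/- Let P = {x : Ax = b, x ≥ 0} ⊂ ℝ^n be a rational polytope with integer data and let α ∈ ℕ^n. Then there exists a polytope P* ⊂ ℝ^{n + 2|α|}, given by Ax = b together with the equations y_{i,j} + z_{i,j} = x_i (1 ≤ j ≤ α_i) after substituting t ↦ x_i - 1 appropriately, such that Σ_{x ∈ P ∩ ℤ^n} x_1^{α_1} ⋯ x_n^{α_n} = #(P* ∩ ℤ^{n+2|α|}). Concretely: x^α = Π_i x_i^{α_i} is realized as a product of late-dilated Ehrhart polynomials of hypercubes, namely x_i^{α_i} = #((x_i - 1)·[0,1]^{α_i} ∩ ℤ^{α_i}) in slack form. -/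
/-- **Corollary (monomial weights via hypercubes)**: the sum of the monomial
`x^α = Π_i x_i^{α_i}` over the lattice points of `P = {x : Ax = b, x ≥ 0}`
equals the number of lattice points of the weight lifting polytope
`P* ⊂ ℝ^{n+2|α|}` given by `Ax = b` and `y_{i,j} + z_{i,j} = x_i - 1`
(`1 ≤ j ≤ α_i`), all coordinates nonnegative; here `x_i^{α_i}` is realized as
the number of lattice points of `(x_i - 1)·[0,1]^{α_i}` in slack form. -/
theorem weight_lifting_monomial (s n : ℕ)
    (A : Matrix (Fin s) (Fin n) ℤ) (b : Fin s → ℤ) (α : Fin n → ℕ)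
    (hP : {x : Fin n → ℤ | A.mulVec x = b ∧ ∀ i, 0 ≤ x i}.Finite) :
    (∑ᶠ x ∈ {x : Fin n → ℤ | A.mulVec x = b ∧ ∀ i, 0 ≤ x i},
        ∏ i, (x i).toNat ^ α i)
      = {p : (Fin n → ℤ) × (∀ i, Fin (α i) → ℤ) × (∀ i, Fin (α i) → ℤ) |
          A.mulVec p.1 = b ∧
          (∀ i j, p.2.1 i j + p.2.2 i j = p.1 i - 1) ∧
          (∀ i, 0 ≤ p.1 i) ∧ (∀ i j, 0 ≤ p.2.1 i j) ∧ (∀ i j, 0 ≤ p.2.2 i j)}.ncard := by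
  classical
  set T := {p : (Fin n → ℤ) × (∀ i, Fin (α i) → ℤ) × (∀ i, Fin (α i) → ℤ) |
          A.mulVec p.1 = b ∧
          (∀ i j, p.2.1 i j + p.2.2 i j = p.1 i - 1) ∧
          (∀ i, 0 ≤ p.1 i) ∧ (∀ i j, 0 ≤ p.2.1 i j) ∧ (∀ i j, 0 ≤ p.2.2 i j)} with hT
  have key : T ≃ Σ x : hP.toFinset, ∀ i, Fin (α i) → Fin (x.1 i).toNat := by
    refine
      { toFun := fun p =>
          ⟨⟨p.1.1, by
            rw [Set.Finite.mem_toFinset]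
            exact ⟨p.2.1, p.2.2.2.1⟩⟩,
           fun i j => ⟨(p.1.2.1 i j).toNat, ?_⟩⟩,
        invFun := fun q =>
          ⟨⟨q.1.1, fun i j => (q.2 i j : ℤ), fun i j => q.1.1 i - 1 - (q.2 i j : ℤ)⟩, ?_⟩,
        left_inv := ?_, right_inv := ?_ }
    · obtain ⟨h1, h2, h3, h4, h5⟩ := p.2
      show (p.1.2.1 i j).toNat < (p.1.1 i).toNat
      have ha := h2 i j
      have hb := h5 i j
      have hc := h4 i j
      omega
    · obtain ⟨⟨x, hx⟩, f⟩ := q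
      rw [Set.Finite.mem_toFinset] at hx
      refine ⟨hx.1, fun i j => by ring, hx.2, fun i j => Int.natCast_nonneg _, fun i j => ?_⟩
      have h1 : ((f i j : ℕ) : ℤ) < ((x i).toNat : ℤ) := by exact_mod_cast (f i j).2
      have h2 := hx.2 i
      show (0:ℤ) ≤ x i - 1 - (f i j : ℕ)
      omega
    · rintro ⟨⟨x, y, z⟩, h1, h2, h3, h4, h5⟩
      apply Subtype.ext
      refine Prod.ext rfl (Prod.ext (funext fun i => funext fun j => ?_)
        (funext fun i => funext fun j => ?_))
      · exact Int.toNat_of_nonneg (h4 i j)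
      · show x i - 1 - ((y i j).toNat : ℤ) = z i j
        have ha : y i j + z i j = x i - 1 := h2 i j
        have hb : ((y i j).toNat : ℤ) = y i j := Int.toNat_of_nonneg (h4 i j)
        omega
    · rintro ⟨⟨x, hx⟩, f⟩
      refine Sigma.ext rfl (heq_of_eq ?_)
      funext i j
      apply Fin.ext
      simp
  have hcard : T.ncard = Nat.card T := (Nat.card_coe_set_eq T).symm
  rw [hcard, Nat.card_congr key, Nat.card_eq_fintype_card, Fintype.card_sigma]
  have hstep : ∑ x : hP.toFinset, Fintype.card (∀ i, Fin (α i) → Fin (x.1 i).toNat)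
      = ∑ x : hP.toFinset, ∏ i, (x.1 i).toNat ^ α i := by
    refine Finset.sum_congr rfl fun x _ => ?_
    rw [Fintype.card_pi]
    refine Finset.prod_congr rfl fun i _ => ?_
    simp [Fintype.card_fun]
  have hsum : (∑ᶠ x ∈ {x : Fin n → ℤ | A.mulVec x = b ∧ ∀ i, 0 ≤ x i},
      ∏ i, (x i).toNat ^ α i) = ∑ x ∈ hP.toFinset, ∏ i, (x i).toNat ^ α i := by
    rw [← finsum_mem_coe_finset, hP.coe_toFinset]
  rw [hstep, hsum, ← Finset.sum_coe_sort]
end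

section
/- For relatively prime positive integers a and b, simultaneous (a,b)-core partitions are in bijection with the integer points c = (c_0,...,c_{a-1}) ∈ ℤ^a satisfying Σ_i c_i = 0 and c_{r_a(i+b)} - c_i ≤ ⌊(b+i)/a⌋ for each 0 ≤ i ≤ a-1, where r_a(x) is the remainder of x modulo a. -/
/-- The hook length of the cell `(i,j)` of a Young diagram. -/
def YoungDiagram.hookLength (Y : YoungDiagram) (i j : ℕ) : ℕ :=
  Y.rowLen i + Y.colLen j - i - j - 1

/-- A Young diagram (partition) is an `a`-core if none of its hook lengths is
divisible by `a`. -/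
def YoungDiagram.IsCore (Y : YoungDiagram) (a : ℕ) : Prop :=
  ∀ c ∈ Y.cells, ¬ a ∣ Y.hookLength c.1 c.2

namespace JohnsonAux

open Classical in
/-- greatest element of `S` strictly below `x` (junk if not well-defined) -/
noncomputable def gb (S : ℤ → Prop) (x : ℤ) : ℤ :=
  if h : (∃ y, S y ∧ y < x) ∧ ∃ bd, ∀ y, S y ∧ y < x → y ≤ bd then
    (Int.exists_greatest_of_bdd h.2 h.1).choose else 0

open Classical in
/-- greatest element of `S` (junk if not well-defined) -/
noncomputable def top (S : ℤ → Prop) : ℤ :=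
  if h : (∃ y, S y) ∧ ∃ bd, ∀ y, S y → y ≤ bd then
    (Int.exists_greatest_of_bdd h.2 h.1).choose else 0

/-- `S` is bounded above and contains all sufficiently negative integers. -/
def BddS (S : ℤ → Prop) : Prop :=
  (∃ hi, ∀ x, S x → x ≤ hi) ∧ (∃ lo, ∀ x, x ≤ lo → S x)

theorem gb_spec {S : ℤ → Prop} (hS : BddS S) (x : ℤ) :
    S (gb S x) ∧ gb S x < x ∧ ∀ y, S y → y < x → y ≤ gb S x := by
  obtain ⟨⟨hi, hhi⟩, ⟨lo, hlo⟩⟩ := hS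
  have h : (∃ y, S y ∧ y < x) ∧ ∃ bd, ∀ y, S y ∧ y < x → y ≤ bd := by
    refine ⟨⟨min lo (x-1), hlo _ (min_le_left _ _), ?_⟩, ⟨hi, fun y hy => hhi y hy.1⟩⟩
    have := min_le_right lo (x-1); omega
  rw [gb, dif_pos h]
  obtain ⟨h1, h2⟩ := (Int.exists_greatest_of_bdd h.2 h.1).choose_spec
  exact ⟨h1.1, h1.2, fun y hy hyx => h2 y ⟨hy, hyx⟩⟩

theorem top_spec {S : ℤ → Prop} (hS : BddS S) :
    S (top S) ∧ ∀ y, S y → y ≤ top S := by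
  obtain ⟨⟨hi, hhi⟩, ⟨lo, hlo⟩⟩ := hS
  have h : (∃ y, S y) ∧ ∃ bd, ∀ y, S y → y ≤ bd := ⟨⟨lo, hlo _ le_rfl⟩, ⟨hi, hhi⟩⟩
  rw [top, dif_pos h]
  exact (Int.exists_greatest_of_bdd h.2 h.1).choose_spec

/-- the decreasing enumeration of `S` -/
noncomputable def enum (S : ℤ → Prop) : ℕ → ℤ
  | 0 => top S
  | n+1 => gb S (enum S n)

variable {S : ℤ → Prop}

theorem enum_mem (hS : BddS S) (n : ℕ) : S (enum S n) := by
  cases n with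
  | zero => exact (top_spec hS).1
  | succ n => exact (gb_spec hS _).1

theorem enum_strictAnti (hS : BddS S) : StrictAnti (enum S) :=
  strictAnti_nat_of_succ_lt fun n => (gb_spec hS (enum S n)).2.1

theorem enum_surj (hS : BddS S) (x : ℤ) (hx : S x) : ∃ n, enum S n = x := by
  obtain ⟨⟨hi, hhi⟩, -⟩ := id hS
  suffices H : ∀ m (x : ℤ), S x → (hi - x).toNat = m → ∃ n, enum S n = x from
    H _ x hx rfl
  intro m
  induction m using Nat.strong_induction_on with
  | _ m ih =>
    intro x hx hm
    by_cases htop : ∀ y, S y → y ≤ x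
    · refine ⟨0, ?_⟩
      rw [show enum S 0 = top S from rfl]
      exact le_antisymm (htop _ (top_spec hS).1) ((top_spec hS).2 x hx)
    · push_neg at htop
      obtain ⟨y, hy, hxy⟩ := htop
      obtain ⟨y₀, ⟨hy₀S, hy₀x⟩, hy₀min⟩ :=
        Int.exists_least_of_bdd (P := fun z => S z ∧ x < z) ⟨x, fun z hz => le_of_lt hz.2⟩
          ⟨y, hy, hxy⟩
      have hxhi := hhi x hx
      obtain ⟨n, hn⟩ := ih (hi - y₀).toNat (by have := hhi _ hy₀S; omega) y₀ hy₀S rfl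
      refine ⟨n+1, le_antisymm ?_ ?_⟩
      · show gb S (enum S n) ≤ x
        by_contra hgt
        push_neg at hgt
        have := hy₀min _ ⟨(gb_spec hS (enum S n)).1, hgt⟩
        rw [hn] at *
        have := (gb_spec hS y₀).2.1
        omega
      · exact (gb_spec hS _).2.2 x hx (by rw [hn]; exact hy₀x)

theorem enum_unique (hS : BddS S) (f : ℕ → ℤ) (hf : StrictAnti f) (hmem : ∀ n, S (f n))
    (hsurj : ∀ x, S x → ∃ n, f n = x) : f = enum S := by
  funext n
  induction n using Nat.strong_induction_on with
  | _ n ih =>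
    rcases lt_trichotomy (f n) (enum S n) with h | h | h
    · obtain ⟨k, hk⟩ := hsurj _ (enum_mem hS n)
      have hkn : k < n := by
        by_contra hkn
        have := hf.antitone (not_lt.mp hkn); omega
      rw [ih k hkn] at hk
      exact absurd hk (ne_of_gt ((enum_strictAnti hS) hkn))
    · exact h
    · obtain ⟨k, hk⟩ := enum_surj hS _ (hmem n)
      have hkn : k < n := by
        by_contra hkn
        have := (enum_strictAnti hS).antitone (not_lt.mp hkn); omega
      rw [← ih k hkn] at hk
      exact absurd hk (ne_of_gt (hf hkn))

/-- slope bound for strictly antitone integer sequences -/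
theorem strictAnti_slope {f : ℕ → ℤ} (hf : StrictAnti f) {n m : ℕ} (h : n ≤ m) :
    f m + m ≤ f n + n := by
  induction m with
  | zero => have : n = 0 := Nat.le_zero.mp h; subst this; simp
  | succ m ih =>
    rcases Nat.eq_or_lt_of_le h with rfl | h'
    · exact le_rfl
    · have h1 := hf (Nat.lt_succ_self m)
      have h2 := ih (Nat.lt_succ_iff.mp h')
      simp only [Nat.succ_eq_add_one, Nat.cast_add, Nat.cast_one] at *; omega


open Classical in
/-- one plus the greatest `k` with `i + a*k ∈ S` -/
noncomputable def cls (S : ℤ → Prop) (a i : ℤ) : ℤ :=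
  if h : (∃ k, S (i + a*k)) ∧ ∃ bd, ∀ k, S (i + a*k) → k ≤ bd then
    (Int.exists_greatest_of_bdd h.2 h.1).choose + 1 else 0

theorem cls_spec {S : ℤ → Prop} (hS : BddS S) {a : ℤ} (ha : 1 ≤ a) (i : ℤ) :
    S (i + a*(cls S a i - 1)) ∧ ∀ k, S (i + a*k) → k ≤ cls S a i - 1 := by
  obtain ⟨⟨hi, hhi⟩, ⟨lo, hlo⟩⟩ := hS
  have h : (∃ k, S (i + a*k)) ∧ ∃ bd, ∀ k, S (i + a*k) → k ≤ bd := by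
    constructor
    · refine ⟨min (lo - i) 0, hlo _ ?_⟩
      have h1 : min (lo - i) 0 ≤ lo - i := min_le_left _ _
      have h2 : min (lo - i) 0 ≤ 0 := min_le_right _ _
      nlinarith [mul_le_mul_of_nonpos_right ha h2]
    · refine ⟨max 0 (hi - i), fun k hk => ?_⟩
      have := hhi _ hk
      rcases le_or_gt k 0 with h' | h'
      · exact le_trans h' (le_max_left _ _)
      · have : k ≤ a * k := le_mul_of_one_le_left (le_of_lt h') ha
        have : a * k ≤ hi - i := by omega
        omega
  rw [cls, dif_pos h]
  obtain ⟨h1, h2⟩ := (Int.exists_greatest_of_bdd h.2 h.1).choose_spec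
  constructor
  · simpa using h1
  · intro k hk; have := h2 k hk; omega

/-- characterization of membership per residue class, for `S` closed under `-a` -/
theorem cls_char {S : ℤ → Prop} (hS : BddS S) {a : ℤ} (ha : 1 ≤ a)
    (hcl : ∀ x, S x → S (x - a)) (i k : ℤ) :
    S (i + a*k) ↔ k < cls S a i := by
  constructor
  · intro hk; have := (cls_spec hS ha i).2 k hk; omega
  · intro hk
    have key : ∀ d : ℕ, S (i + a*(cls S a i - 1 - d)) := by
      intro d
      induction d with
      | zero => simpa using (cls_spec hS ha i).1
      | succ d ih =>
        have := hcl _ ih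
        have e : i + a * (cls S a i - 1 - ↑d) - a = i + a*(cls S a i - 1 - (↑d + 1)) := by ring
        rw [e] at this
        simpa [Nat.cast_add] using this
    have := key (cls S a i - 1 - k).toNat
    have e : cls S a i - 1 - ((cls S a i - 1 - k).toNat : ℤ) = k := by omega
    rwa [e] at this

theorem cls_eq_of {S : ℤ → Prop} (hS : BddS S) {a : ℤ} (ha : 1 ≤ a)
    (hcl : ∀ x, S x → S (x - a)) {i m : ℤ} (h : ∀ k, S (i + a*k) ↔ k < m) :
    cls S a i = m := by
  have key : ∀ k, (k < cls S a i) ↔ k < m := fun k => (cls_char hS ha hcl i k).symm.trans (h k)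
  have a1 := (key (m-1)).mpr
  have a2 := (key (cls S a i - 1)).mp
  omega

/-- the residue of `x` mod `a` as an element of `Fin a` -/
def resFin {a : ℕ} (ha : 0 < a) (x : ℤ) : Fin a :=
  ⟨(x % (a:ℤ)).toNat, by
    have h1 : 0 ≤ x % (a:ℤ) := Int.emod_nonneg x (by exact_mod_cast ha.ne')
    have h2 : x % (a:ℤ) < a := Int.emod_lt_of_pos x (by exact_mod_cast ha)
    omega⟩

theorem resFin_spec {a : ℕ} (ha : 0 < a) (x : ℤ) :
    ((resFin ha x : ℕ) : ℤ) = x % a ∧ x = ((resFin ha x : ℕ) : ℤ) + a * (x / a) := by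
  have h1 : 0 ≤ x % (a:ℤ) := Int.emod_nonneg x (by exact_mod_cast ha.ne')
  have h3 : ((resFin ha x : ℕ) : ℤ) = x % a := by simp [resFin, Int.toNat_of_nonneg h1]
  refine ⟨h3, ?_⟩
  rw [h3]
  have := Int.mul_ediv_add_emod x a
  omega

theorem resFin_add_mul {a : ℕ} (ha : 0 < a) (i : Fin a) (k : ℤ) :
    resFin ha ((i : ℤ) + a * k) = i ∧ ((i : ℤ) + a * k) / a = k := by
  have h1 : ((i : ℤ) + a * k) % a = (i : ℤ) := by
    rw [Int.add_mul_emod_self_left]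
    exact Int.emod_eq_of_lt (by positivity) (by exact_mod_cast i.2)
  have h2 : ((i : ℤ) + a * k) / a = k := by
    rw [Int.add_mul_ediv_left _ _ (by exact_mod_cast ha.ne' : (a:ℤ) ≠ 0),
      Int.ediv_eq_zero_of_lt (by positivity) (by exact_mod_cast i.2)]
    omega
  refine ⟨?_, h2⟩
  apply Fin.ext
  have := (resFin_spec ha ((i : ℤ) + a * k)).1
  rw [h1] at this
  exact_mod_cast this


theorem filter_enum [DecidablePred S] (hS : BddS S) {H : ℤ} (hH : ∀ x, S x → x ≤ H) (m : ℕ) :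
    ((Finset.Icc (enum S m) H).filter S).card = m + 1 := by
  have himg : (Finset.Icc (enum S m) H).filter S = (Finset.range (m+1)).image (enum S) := by
    ext x
    simp only [Finset.mem_filter, Finset.mem_Icc, Finset.mem_image, Finset.mem_range]
    constructor
    · rintro ⟨⟨h1, h2⟩, hSx⟩
      obtain ⟨n, rfl⟩ := enum_surj hS x hSx
      refine ⟨n, ?_, rfl⟩
      by_contra hn
      have := enum_strictAnti hS (show m < n by omega)
      omega
    · rintro ⟨n, hn, rfl⟩
      exact ⟨⟨(enum_strictAnti hS).antitone (by omega), hH _ (enum_mem hS n)⟩, enum_mem hS n⟩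
  rw [himg, Finset.card_image_of_injective _ (enum_strictAnti hS).injective, Finset.card_range]

theorem class_count [DecidablePred S] (hS : BddS S) {a : ℕ} (ha : 0 < a) (c : Fin a → ℤ)
    (hchar : ∀ (i : Fin a) (k : ℤ), S ((i:ℤ) + a*k) ↔ k < c i)
    {H : ℤ} (hH : ∀ x, S x → x ≤ H) {K : ℤ} (hK : ∀ i, -K ≤ c i) :
    (((Finset.Icc (-(a:ℤ)*K) H).filter S).card : ℤ) = (∑ i : Fin a, c i) + a*K := by
  have ha' : (0:ℤ) < a := by exact_mod_cast ha
  have hbi : (Finset.Icc (-(a:ℤ)*K) H).filter S =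
      Finset.univ.biUnion (fun i : Fin a =>
        (Finset.Ico (-K) (c i)).image (fun k => (i:ℤ) + a*k)) := by
    ext x
    simp only [Finset.mem_filter, Finset.mem_Icc, Finset.mem_biUnion, Finset.mem_image,
      Finset.mem_Ico, Finset.mem_univ, true_and]
    constructor
    · rintro ⟨⟨h1, h2⟩, hSx⟩
      refine ⟨resFin ha x, x / a, ⟨?_, ?_⟩, ((resFin_spec ha x).2).symm⟩
      · have hx := (resFin_spec ha x).2
        have hib : ((resFin ha x : ℕ) : ℤ) < a := by exact_mod_cast (resFin ha x).2
        have hib0 : (0:ℤ) ≤ ((resFin ha x : ℕ) : ℤ) := by positivity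
        nlinarith [hx, h1]
      · have := (hchar (resFin ha x) (x / a)).mp (by rw [← (resFin_spec ha x).2]; exact hSx)
        exact this
    · rintro ⟨i, k, ⟨hk1, hk2⟩, rfl⟩
      have hib : ((i : ℕ) : ℤ) < a := by exact_mod_cast i.2
      have hib0 : (0:ℤ) ≤ ((i : ℕ) : ℤ) := by positivity
      have hSx := (hchar i k).mpr hk2
      refine ⟨⟨?_, hH _ hSx⟩, hSx⟩
      nlinarith [mul_le_mul_of_nonneg_left hk1 (le_of_lt ha')]
  rw [hbi, Finset.card_biUnion]
  · have hcard : ∀ i : Fin a, ((Finset.Ico (-K) (c i)).image (fun k => (i:ℤ) + a*k)).card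
        = (c i + K).toNat := by
      intro i
      rw [Finset.card_image_of_injective _ (fun x y hxy => by
        have : (a:ℤ) * x = a * y := by omega
        exact mul_left_cancel₀ (ne_of_gt ha') this), Int.card_Ico]
      congr 1; omega
    rw [Finset.sum_congr rfl (fun i _ => hcard i)]
    rw [Nat.cast_sum]
    have : ∀ i : Fin a, (((c i + K).toNat : ℤ)) = c i + K := fun i =>
      Int.toNat_of_nonneg (by linarith [hK i])
    rw [Finset.sum_congr rfl (fun i _ => this i), Finset.sum_add_distrib]
    simp [mul_comm]
  · intro i _ j _ hij
    rw [Function.onFun, Finset.disjoint_left]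
    rintro x hx hx'
    simp only [Finset.mem_image, Finset.mem_Ico] at hx hx'
    obtain ⟨k, -, rfl⟩ := hx
    obtain ⟨k', -, he⟩ := hx'
    apply hij
    have h1 := (resFin_add_mul ha i k).1
    have h2 := (resFin_add_mul ha j k').1
    rw [he] at h2
    rw [← h1, h2]

theorem count_eq (hS : BddS S) {a : ℕ} (ha : 0 < a)
    (hcl : ∀ x, S x → S (x - (a:ℤ))) {K : ℤ}
    (hK : ∀ i : Fin a, -K ≤ cls S (a:ℤ) (i:ℤ)) {m : ℕ}
    (hm : enum S m = -(a:ℤ)*K) :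
    (m:ℤ) + 1 = (∑ i : Fin a, cls S (a:ℤ) (i:ℤ)) + a*K := by
  classical
  have ha' : (1:ℤ) ≤ a := by exact_mod_cast ha
  obtain ⟨H, hH⟩ := hS.1
  have h1 := filter_enum hS hH m
  rw [hm] at h1
  have h2 := class_count hS ha (fun i : Fin a => cls S (a:ℤ) (i:ℤ))
    (fun i k => cls_char hS ha' hcl (i:ℤ) k) hH hK
  rw [h1] at h2
  show (m:ℤ) + 1 = (∑ i : Fin a, (fun i : Fin a => cls S (a:ℤ) (i:ℤ)) i) + (a:ℤ)*K
  exact_mod_cast h2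

/-- From eventual `enum n = -1-n`, the class constants sum to zero. -/
theorem sum_cls_eq_zero (hS : BddS S) {a : ℕ} (ha : 0 < a)
    (hcl : ∀ x, S x → S (x - (a:ℤ))) {N : ℕ}
    (hev : ∀ n : ℕ, N ≤ n → enum S n = -1 - (n:ℤ)) :
    ∑ i : Fin a, cls S (a:ℤ) (i:ℤ) = 0 := by
  have ha' : (1:ℤ) ≤ a := by exact_mod_cast ha
  set K : ℤ := (N:ℤ) + 1 + ∑ i : Fin a, |cls S (a:ℤ) (i:ℤ)| with hKdef
  have habs : ∀ i : Fin a, |cls S (a:ℤ) (i:ℤ)| ≤ ∑ j : Fin a, |cls S (a:ℤ) (j:ℤ)| := fun i =>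
    Finset.single_le_sum (f := fun j : Fin a => |cls S (a:ℤ) (j:ℤ)|)
      (fun j _ => abs_nonneg _) (Finset.mem_univ i)
  have hsumabs : 0 ≤ ∑ j : Fin a, |cls S (a:ℤ) (j:ℤ)| :=
    Finset.sum_nonneg (fun j _ => abs_nonneg _)
  have hK : ∀ i : Fin a, -K ≤ cls S (a:ℤ) (i:ℤ) := by
    intro i
    have h1 := habs i
    have h2 := abs_le.mp (le_refl |cls S (a:ℤ) (i:ℤ)|)
    omega
  have hKpos : (N:ℤ) + 1 ≤ K := by omega
  have haK : (N:ℤ) + 1 ≤ (a:ℤ)*K := by nlinarith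
  set m : ℕ := ((a:ℤ)*K - 1).toNat with hmdef
  have hm : (m:ℤ) = (a:ℤ)*K - 1 := by
    rw [hmdef]; rw [Int.toNat_of_nonneg (by linarith)]
  have hmN : N ≤ m := by
    have : (N:ℤ) ≤ (m:ℤ) := by linarith
    exact_mod_cast this
  have henm : enum S m = -(a:ℤ)*K := by
    rw [hev m hmN]; linarith
  have hcnt := count_eq hS ha hcl hK henm
  linarith

/-- From zero-sum class constants, `enum n = -1-n` eventually. -/
theorem enum_eventually (hS : BddS S) {a : ℕ} (ha : 0 < a)
    (hcl : ∀ x, S x → S (x - (a:ℤ)))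
    (hsum : ∑ i : Fin a, cls S (a:ℤ) (i:ℤ) = 0) :
    ∃ N : ℕ, ∀ n : ℕ, N ≤ n → enum S n = -1 - (n:ℤ) := by
  have ha' : (1:ℤ) ≤ a := by exact_mod_cast ha
  obtain ⟨lo, hlo⟩ := hS.2
  set K : ℤ := |lo| + 1 + ∑ i : Fin a, |cls S (a:ℤ) (i:ℤ)| with hKdef
  have habs : ∀ i : Fin a, |cls S (a:ℤ) (i:ℤ)| ≤ ∑ j : Fin a, |cls S (a:ℤ) (j:ℤ)| := fun i =>
    Finset.single_le_sum (f := fun j : Fin a => |cls S (a:ℤ) (j:ℤ)|)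
      (fun j _ => abs_nonneg _) (Finset.mem_univ i)
  have hsumabs : 0 ≤ ∑ j : Fin a, |cls S (a:ℤ) (j:ℤ)| :=
    Finset.sum_nonneg (fun j _ => abs_nonneg _)
  have hK : ∀ i : Fin a, -K ≤ cls S (a:ℤ) (i:ℤ) := by
    intro i
    have h1 := habs i
    have h2 := abs_le.mp (le_refl |cls S (a:ℤ) (i:ℤ)|)
    have := abs_nonneg lo
    omega
  have hKpos : 1 ≤ K := by have := abs_nonneg lo; omega
  have haK : K ≤ (a:ℤ)*K := le_mul_of_one_le_left (by omega) ha'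
  have hlo' : ∀ x : ℤ, x ≤ -(a:ℤ)*K → S x := by
    intro x hx
    apply hlo
    have h1 : -|lo| ≤ lo := neg_abs_le lo
    have : -(a:ℤ)*K = -((a:ℤ)*K) := by ring
    linarith
  obtain ⟨m, hm⟩ := enum_surj hS (-(a:ℤ)*K) (hlo' _ le_rfl)
  have hcount := count_eq hS ha hcl hK hm
  rw [hsum] at hcount
  have hbase : enum S m = -1 - (m:ℤ) := by
    rw [hm]
    have : -(a:ℤ)*K = -((a:ℤ)*K) := by ring
    linarith
  refine ⟨m, ?_⟩
  intro n hn
  induction n with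
  | zero =>
    have : m = 0 := Nat.le_zero.mp hn
    subst this; simpa using hbase
  | succ n ih =>
    rcases Nat.eq_or_lt_of_le hn with h' | h'
    · rw [← h']; exact_mod_cast hbase
    · have hnm : m ≤ n := Nat.lt_succ_iff.mp h'
      have hen := ih hnm
      have step : enum S (n+1) = enum S n - 1 := by
        have hmem : S (enum S n - 1) := by
          apply hlo'
          rw [hen]
          have : -(a:ℤ)*K = -((a:ℤ)*K) := by ring
          have h2 : (m:ℤ) ≤ n := by exact_mod_cast hnm
          linarith
        have hgb := gb_spec hS (enum S n)
        have h1 := hgb.2.2 _ hmem (by omega)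
        have h2 := hgb.2.1
        show gb S (enum S n) = enum S n - 1
        omega
      rw [step, hen]; push_cast; ring


/-! ### Young diagram side -/

/-- beta numbers of a Young diagram -/
def betaY (Y : YoungDiagram) (n : ℕ) : ℤ := (Y.rowLen n : ℤ) - 1 - n

/-- the beta set of a Young diagram -/
def SY (Y : YoungDiagram) : ℤ → Prop := fun x => ∃ n, betaY Y n = x

/-- the complementary ("gap") numbers of a Young diagram -/
def cogap (Y : YoungDiagram) (j : ℕ) : ℤ := (j:ℤ) - Y.colLen j

theorem betaY_strictAnti (Y : YoungDiagram) : StrictAnti (betaY Y) := by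
  apply strictAnti_nat_of_succ_lt
  intro n
  have := Y.rowLen_anti n (n+1) (by omega)
  simp only [betaY]; push_cast; omega

theorem cogap_strictMono (Y : YoungDiagram) : StrictMono (cogap Y) := by
  apply strictMono_nat_of_lt_succ
  intro n
  have := Y.colLen_anti n (n+1) (by omega)
  simp only [cogap]; push_cast; omega

theorem mem_iff_cogap_lt (Y : YoungDiagram) (i j : ℕ) :
    (i, j) ∈ Y ↔ cogap Y j < betaY Y i := by
  constructor
  · intro h
    have h1 : j < Y.rowLen i := YoungDiagram.mem_iff_lt_rowLen.mp h
    have h2 : i < Y.colLen j := YoungDiagram.mem_iff_lt_colLen.mp h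
    simp only [betaY, cogap]; push_cast; omega
  · intro h
    by_contra hmem
    have h1 : Y.rowLen i ≤ j := by
      by_contra h'
      exact hmem (YoungDiagram.mem_iff_lt_rowLen.mpr (by omega))
    have h2 : Y.colLen j ≤ i := by
      by_contra h'
      exact hmem (YoungDiagram.mem_iff_lt_colLen.mpr (by omega))
    simp only [betaY, cogap] at h; push_cast at h; omega

theorem cogap_not_mem (Y : YoungDiagram) (j : ℕ) : ¬ SY Y (cogap Y j) := by
  rintro ⟨i, hi⟩
  by_cases hmem : (i, j) ∈ Y
  · have := (mem_iff_cogap_lt Y i j).mp hmem; omega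
  · have h1 : Y.rowLen i ≤ j := by
      by_contra h'
      exact hmem (YoungDiagram.mem_iff_lt_rowLen.mpr (by omega))
    have h2 : Y.colLen j ≤ i := by
      by_contra h'
      exact hmem (YoungDiagram.mem_iff_lt_colLen.mpr (by omega))
    simp only [betaY, cogap] at hi; push_cast at hi; omega

theorem rowLen_zero_of_ge (Y : YoungDiagram) {n : ℕ} (hn : Y.colLen 0 ≤ n) :
    Y.rowLen n = 0 := by
  by_contra h
  have : (n, 0) ∈ Y := YoungDiagram.mem_iff_lt_rowLen.mpr (by omega)
  have := YoungDiagram.mem_iff_lt_colLen.mp this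
  omega

theorem betaY_of_le (Y : YoungDiagram) {x : ℤ} (hx : x ≤ -1 - (Y.colLen 0 : ℤ)) :
    betaY Y ((-1-x).toNat) = x := by
  have h1 : ((-1-x).toNat : ℤ) = -1 - x := Int.toNat_of_nonneg (by omega)
  have h2 : Y.colLen 0 ≤ (-1-x).toNat := by omega
  simp only [betaY, rowLen_zero_of_ge Y h2]
  omega

theorem SY_bddS (Y : YoungDiagram) : BddS (SY Y) := by
  constructor
  · refine ⟨betaY Y 0, ?_⟩
    rintro x ⟨n, rfl⟩
    exact (betaY_strictAnti Y).antitone (Nat.zero_le n)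
  · exact ⟨-1 - (Y.colLen 0 : ℤ), fun x hx => ⟨_, betaY_of_le Y hx⟩⟩

theorem enum_SY (Y : YoungDiagram) : betaY Y = enum (SY Y) :=
  enum_unique (SY_bddS Y) (betaY Y) (betaY_strictAnti Y) (fun n => ⟨n, rfl⟩)
    (fun x hx => hx)

theorem betaY_large (Y : YoungDiagram) {n : ℕ} (hn : Y.colLen 0 ≤ n) :
    betaY Y n = -1 - (n:ℤ) := by
  simp only [betaY, rowLen_zero_of_ge Y hn]; push_cast; ring

/-- covering: every integer is a beta number or a gap number -/
theorem betaY_cogap_cover (Y : YoungDiagram) (x : ℤ) :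
    SY Y x ∨ ∃ j, cogap Y j = x := by
  by_cases hex : ∃ j, cogap Y j = x
  · exact Or.inr hex
  push_neg at hex
  left
  by_cases hx0 : x < cogap Y 0
  · have : cogap Y 0 = -(Y.colLen 0 : ℤ) := by simp [cogap]
    exact ⟨_, betaY_of_le Y (by omega)⟩
  · push_neg at hx0
    have hx0' : cogap Y 0 < x := lt_of_le_of_ne hx0 (hex 0)
    have hbound : ∀ j : ℕ, cogap Y j < x → (j:ℤ) < x + Y.colLen 0 := by
      intro j hj
      have := Y.colLen_anti 0 j (Nat.zero_le j)
      simp only [cogap] at hj; push_cast at hj ⊢; omega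
    obtain ⟨j₀, hP, hnP⟩ : ∃ j₀, cogap Y j₀ < x ∧ ¬ (cogap Y (j₀+1) < x) := by
      by_contra hcon
      push_neg at hcon
      have hall : ∀ j, cogap Y j < x := by
        intro j; induction j with
        | zero => exact hx0'
        | succ j ih => exact hcon j ih
      have := hbound ((x + Y.colLen 0).toNat + 1) (hall _)
      push_cast at this
      omega
    have hgt : x < cogap Y (j₀+1) := lt_of_le_of_ne (not_lt.mp hnP) (fun h => hex _ h.symm)
    -- now cogap j₀ < x < cogap (j₀+1); set i := j₀ - x
    have hxle : x ≤ (j₀:ℤ) := by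
      simp only [cogap] at hgt; push_cast at hgt; omega
    set i : ℕ := ((j₀:ℤ) - x).toNat with hi
    have hi' : (i:ℤ) = (j₀:ℤ) - x := Int.toNat_of_nonneg (by omega)
    have hiu : i < Y.colLen j₀ := by
      simp only [cogap] at hP; push_cast at hP; omega
    have hil : Y.colLen (j₀+1) ≤ i := by
      simp only [cogap] at hgt; push_cast at hgt; omega
    have hrl : Y.rowLen i = j₀ + 1 := by
      have hge : j₀ < Y.rowLen i :=
        YoungDiagram.mem_iff_lt_rowLen.mp (YoungDiagram.mem_iff_lt_colLen.mpr hiu)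
      have hle' : ¬ (j₀ + 1 < Y.rowLen i) := by
        intro h
        exact absurd (YoungDiagram.mem_iff_lt_colLen.mp
          (YoungDiagram.mem_iff_lt_rowLen.mpr h)) (by omega)
      omega
    exact ⟨i, by simp only [betaY, hrl]; push_cast; omega⟩

theorem hook_eq (Y : YoungDiagram) {i j : ℕ} (h : (i, j) ∈ Y) :
    (Y.hookLength i j : ℤ) = betaY Y i - cogap Y j := by
  have h1 : j < Y.rowLen i := YoungDiagram.mem_iff_lt_rowLen.mp h
  have h2 : i < Y.colLen j := YoungDiagram.mem_iff_lt_colLen.mp h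
  simp only [YoungDiagram.hookLength, betaY, cogap]
  push_cast [Nat.sub_sub]
  omega

theorem isCore_iff (Y : YoungDiagram) {a : ℕ} (ha : 0 < a) :
    Y.IsCore a ↔ ∀ x, SY Y x → SY Y (x - (a:ℤ)) := by
  constructor
  · intro hcore x hx
    by_contra hnx
    rcases betaY_cogap_cover Y (x - a) with h | ⟨j, hj⟩
    · exact hnx h
    obtain ⟨i, rfl⟩ := hx
    have hmem : (i, j) ∈ Y := by
      rw [mem_iff_cogap_lt]
      have : (0:ℤ) < a := by exact_mod_cast ha
      omega
    apply hcore (i, j) (by rwa [YoungDiagram.mem_cells])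
    have : (Y.hookLength i j : ℤ) = a := by rw [hook_eq Y hmem]; omega
    have : Y.hookLength i j = a := by exact_mod_cast this
    exact this ▸ dvd_refl a
  · intro hcl
    rintro ⟨i, j⟩ hc ⟨k, hk⟩
    rw [YoungDiagram.mem_cells] at hc
    have hk' : Y.hookLength i j = a * k := hk
    have hhe := hook_eq Y hc
    have hmm := (mem_iff_cogap_lt Y i j).mp hc
    have hpos : 0 < Y.hookLength i j := by omega
    have hk1 : 1 ≤ k := by
      rcases Nat.eq_zero_or_pos k with rfl | h
      · omega
      · exact h
    have iter : ∀ m : ℕ, SY Y (betaY Y i - a*m) := by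
      intro m
      induction m with
      | zero => exact ⟨i, by simp⟩
      | succ m ih =>
        have := hcl _ ih
        have e : betaY Y i - (a:ℤ)*m - a = betaY Y i - a*(m+1) := by ring
        rw [e] at this
        exact_mod_cast this
    have hiter := iter k
    have he : betaY Y i - (a:ℤ)*k = cogap Y j := by
      rw [hk'] at hhe
      push_cast at hhe
      omega
    rw [he] at hiter
    exact cogap_not_mem Y j hiter


/-! ### b-closedness in terms of class constants -/

theorem key_identity {a b : ℕ} (ha : 0 < a) (i : Fin a) :
    (b:ℤ) + (i:ℕ) = (a:ℤ) * (((b:ℤ) + (i:ℕ)) / a) + ((((i:ℕ) + b) % a : ℕ) : ℤ) := by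
  have h1 : ((((i:ℕ) + b) % a : ℕ) : ℤ) = ((b:ℤ) + (i:ℕ)) % a := by
    rw [Int.natCast_mod]
    push_cast
    ring_nf
  rw [h1]
  have := Int.mul_ediv_add_emod ((b:ℤ) + (i:ℕ)) a
  omega

theorem closed_b_iff {S : ℤ → Prop} (hS : BddS S) {a b : ℕ} (ha : 0 < a)
    (hcl : ∀ x, S x → S (x - (a:ℤ))) :
    (∀ x, S x → S (x - (b:ℤ))) ↔
      ∀ i : Fin a, cls S (a:ℤ) (((((i:ℕ) + b) % a : ℕ)) : ℤ) - cls S (a:ℤ) ((i:ℕ):ℤ)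
        ≤ ((b:ℤ) + (i:ℕ)) / a := by
  have ha' : (1:ℤ) ≤ a := by exact_mod_cast ha
  constructor
  · intro hb i
    obtain ⟨q, hq⟩ : ∃ q, ((b:ℤ) + (i:ℕ)) / (a:ℤ) = q := ⟨_, rfl⟩
    rw [hq]
    have hid := key_identity (b := b) ha i
    rw [hq] at hid
    have hx : S (((((i:ℕ) + b) % a : ℕ) : ℤ)
        + (a:ℤ)*(cls S (a:ℤ) (((((i:ℕ) + b) % a : ℕ)) : ℤ) - 1)) :=
      (cls_char hS ha' hcl _ _).mpr (by omega)
    have hxb := hb _ hx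
    have he : ((((i:ℕ) + b) % a : ℕ) : ℤ)
        + (a:ℤ)*(cls S (a:ℤ) (((((i:ℕ) + b) % a : ℕ)) : ℤ) - 1) - b
        = ((i:ℕ):ℤ) + (a:ℤ)*(cls S (a:ℤ) (((((i:ℕ) + b) % a : ℕ)) : ℤ) - 1 - q) := by
      linear_combination - hid
    rw [he] at hxb
    have := (cls_char hS ha' hcl ((i:ℕ):ℤ) _).mp hxb
    omega
  · intro hineq x hx
    have hspec := resFin_spec ha (x - b)
    obtain ⟨t, ht⟩ : ∃ t, (x - (b:ℤ)) / (a:ℤ) = t := ⟨_, rfl⟩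
    have hxd : x - b = ((resFin ha (x-b) : ℕ):ℤ) + (a:ℤ) * t := by rw [← ht]; exact hspec.2
    obtain ⟨q, hq⟩ : ∃ q, ((b:ℤ) + ((resFin ha (x-b) : ℕ):ℤ)) / (a:ℤ) = q := ⟨_, rfl⟩
    have hid := key_identity (b := b) ha (resFin ha (x-b))
    rw [hq] at hid
    have hineq₀ := hineq (resFin ha (x-b))
    rw [hq] at hineq₀
    have hxj : x = ((((resFin ha (x-b) : ℕ) + b) % a : ℕ) : ℤ) + (a:ℤ) * (q + t) := by
      linear_combination hxd + hid
    rw [hxj] at hx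
    have h1 := (cls_char hS ha' hcl _ _).mp hx
    have h2 : t < cls S (a:ℤ) ((resFin ha (x-b) : ℕ):ℤ) := by omega
    have hfin := (cls_char hS ha' hcl ((resFin ha (x-b) : ℕ):ℤ) t).mpr h2
    rw [← hxd] at hfin
    exact hfin

/-! ### the beta set attached to a lattice point -/

/-- the beta set attached to `c : Fin a → ℤ` -/
def Sc {a : ℕ} (ha : 0 < a) (c : Fin a → ℤ) : ℤ → Prop :=
  fun x => x / (a:ℤ) < c (resFin ha x)

theorem Sc_iff {a : ℕ} (ha : 0 < a) (c : Fin a → ℤ) (i : Fin a) (k : ℤ) :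
    Sc ha c ((i:ℤ) + (a:ℤ)*k) ↔ k < c i := by
  have h := resFin_add_mul ha i k
  rw [Sc, h.1, h.2]

theorem Sc_bddS {a : ℕ} (ha : 0 < a) (c : Fin a → ℤ) : BddS (Sc ha c) := by
  have ha' : (0:ℤ) < a := by exact_mod_cast ha
  set C : ℤ := ∑ i : Fin a, |c i| with hC
  have habs : ∀ i : Fin a, |c i| ≤ C := fun i =>
    Finset.single_le_sum (f := fun j : Fin a => |c j|) (fun j _ => abs_nonneg _)
      (Finset.mem_univ i)
  constructor
  · refine ⟨(a:ℤ)*(C+1), fun x hx => ?_⟩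
    have hspec := (resFin_spec ha x).2
    have hib : ((resFin ha x : ℕ) : ℤ) < a := by exact_mod_cast (resFin ha x).2
    have h1 : x / (a:ℤ) < c (resFin ha x) := hx
    have h2 := habs (resFin ha x)
    have h3 := abs_le.mp (le_refl |c (resFin ha x)|)
    nlinarith [hspec]
  · refine ⟨-(a:ℤ)*(C+1), fun x hx => ?_⟩
    have h2 := habs (resFin ha x)
    have h3 := abs_le.mp (le_refl |c (resFin ha x)|)
    have hq : x / (a:ℤ) ≤ -(C+1) := by
      have : x ≤ (a:ℤ) * (-(C+1)) := by nlinarith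
      calc x / (a:ℤ) ≤ ((a:ℤ) * (-(C+1))) / a := Int.ediv_le_ediv ha' this
        _ = -(C+1) := Int.mul_ediv_cancel_left _ (ne_of_gt ha')
    show x / (a:ℤ) < c (resFin ha x)
    omega

theorem Sc_closed {a : ℕ} (ha : 0 < a) (c : Fin a → ℤ) :
    ∀ x, Sc ha c x → Sc ha c (x - (a:ℤ)) := by
  intro x hx
  have hspec := (resFin_spec ha x).2
  have he : x - (a:ℤ) = ((resFin ha x : ℕ) : ℤ) + (a:ℤ) * (x / a - 1) := by
    have : (a:ℤ) * (x / a - 1) = a * (x/a) - a := by ring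
    omega
  rw [he, Sc_iff]
  exact lt_of_le_of_lt (by omega) hx

theorem cls_Sc {a : ℕ} (ha : 0 < a) (c : Fin a → ℤ) (i : Fin a) :
    cls (Sc ha c) (a:ℤ) ((i:ℕ):ℤ) = c i :=
  cls_eq_of (Sc_bddS ha c) (by exact_mod_cast ha) (Sc_closed ha c)
    (fun k => Sc_iff ha c i k)

/-! ### building a Young diagram from an enumeration -/

theorem enum_ge {S : ℤ → Prop} (hS : BddS S) {N : ℕ}
    (hev : ∀ n : ℕ, N ≤ n → enum S n = -1 - (n:ℤ)) (n : ℕ) :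
    -1 - (n:ℤ) ≤ enum S n := by
  have h1 := hev (max n N) (le_max_right _ _)
  have h2 := strictAnti_slope (enum_strictAnti hS) (le_max_left n N)
  have h3 : (n:ℤ) ≤ (max n N : ℕ) := by exact_mod_cast le_max_left n N
  omega

/-- the Young diagram whose beta set is `S` -/
noncomputable def diagOfEnum (S : ℤ → Prop) (hS : BddS S) {N : ℕ}
    (hev : ∀ n : ℕ, N ≤ n → enum S n = -1 - (n:ℤ)) : YoungDiagram where
  cells := (Finset.range N ×ˢ Finset.range ((enum S 0 + 1).toNat)).filter
      (fun p => (p.2:ℤ) < enum S p.1 + 1 + p.1)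
  isLowerSet := by
    intro x y hyx hx
    simp only [Finset.coe_filter, Set.mem_setOf_eq, Finset.mem_product, Finset.mem_range] at hx ⊢
    obtain ⟨⟨hx1, hx2⟩, hx3⟩ := hx
    obtain ⟨h1, h2⟩ := hyx
    have hslope := strictAnti_slope (enum_strictAnti hS) h1
    refine ⟨⟨by omega, by omega⟩, ?_⟩
    have hc1 : ((y.2:ℕ):ℤ) ≤ ((x.2:ℕ):ℤ) := by exact_mod_cast h2
    have hc2 : ((y.1:ℕ):ℤ) ≤ ((x.1:ℕ):ℤ) := by exact_mod_cast h1
    omega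

theorem mem_diagOfEnum {S : ℤ → Prop} (hS : BddS S) {N : ℕ}
    (hev : ∀ n : ℕ, N ≤ n → enum S n = -1 - (n:ℤ)) (i j : ℕ) :
    (i, j) ∈ diagOfEnum S hS hev ↔ (j:ℤ) < enum S i + 1 + i := by
  show (i, j) ∈ (diagOfEnum S hS hev).cells ↔ _
  simp only [diagOfEnum, Finset.mem_filter, Finset.mem_product, Finset.mem_range]
  constructor
  · rintro ⟨-, h⟩; exact h
  · intro h
    refine ⟨⟨?_, ?_⟩, h⟩
    · by_contra hiN
      push_neg at hiN
      have := hev i hiN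
      omega
    · have hslope := strictAnti_slope (enum_strictAnti hS) (Nat.zero_le i)
      have : (j:ℤ) < enum S 0 + 1 := by omega
      have h0 : (0:ℤ) ≤ enum S 0 + 1 := by
        have := enum_ge hS hev 0; omega
      have := Int.toNat_of_nonneg h0
      omega

theorem rowLen_eq_of_iff {Y : YoungDiagram} {n t : ℕ} (h : ∀ j, (n, j) ∈ Y ↔ j < t) :
    Y.rowLen n = t := by
  have h1 : ¬ (t < Y.rowLen n) := fun hc =>
    absurd ((h t).mp (YoungDiagram.mem_iff_lt_rowLen.mpr hc)) (by omega)
  rcases Nat.eq_zero_or_pos t with rfl | hpos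
  · omega
  · have h2 := YoungDiagram.mem_iff_lt_rowLen.mp ((h (t-1)).mpr (by omega))
    omega

theorem rowLen_diagOfEnum {S : ℤ → Prop} (hS : BddS S) {N : ℕ}
    (hev : ∀ n : ℕ, N ≤ n → enum S n = -1 - (n:ℤ)) (n : ℕ) :
    ((diagOfEnum S hS hev).rowLen n : ℤ) = enum S n + 1 + n := by
  have hge := enum_ge hS hev n
  have : (diagOfEnum S hS hev).rowLen n = (enum S n + 1 + n).toNat := by
    apply rowLen_eq_of_iff
    intro j
    rw [mem_diagOfEnum hS hev]
    omega
  rw [this, Int.toNat_of_nonneg (by omega)]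

theorem betaY_diagOfEnum {S : ℤ → Prop} (hS : BddS S) {N : ℕ}
    (hev : ∀ n : ℕ, N ≤ n → enum S n = -1 - (n:ℤ)) :
    betaY (diagOfEnum S hS hev) = enum S := by
  funext n
  rw [betaY, rowLen_diagOfEnum hS hev]
  ring

theorem SY_diagOfEnum {S : ℤ → Prop} (hS : BddS S) {N : ℕ}
    (hev : ∀ n : ℕ, N ≤ n → enum S n = -1 - (n:ℤ)) :
    SY (diagOfEnum S hS hev) = S := by
  funext x
  rw [SY, betaY_diagOfEnum hS hev]
  exact propext ⟨fun ⟨n, hn⟩ => hn ▸ enum_mem hS n, fun hx => enum_surj hS x hx⟩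

theorem eq_of_rowLen_eq {Y₁ Y₂ : YoungDiagram} (h : ∀ n, Y₁.rowLen n = Y₂.rowLen n) :
    Y₁ = Y₂ := by
  cases Y₁ with
  | mk c₁ h₁ =>
    cases Y₂ with
    | mk c₂ h₂ =>
      congr 1
      ext ⟨i, j⟩
      have := h i
      rw [show (⟨i,j⟩ : ℕ × ℕ) ∈ c₁ ↔ (i, j) ∈ YoungDiagram.mk c₁ h₁ from Iff.rfl]
      rw [show (⟨i,j⟩ : ℕ × ℕ) ∈ c₂ ↔ (i, j) ∈ YoungDiagram.mk c₂ h₂ from Iff.rfl]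
      rw [YoungDiagram.mem_iff_lt_rowLen, YoungDiagram.mem_iff_lt_rowLen, this]


/-! ### glue -/

theorem hevSc {a : ℕ} (ha : 0 < a) (c : Fin a → ℤ) (hsum : (∑ i, c i) = 0) :
    ∃ N : ℕ, ∀ n : ℕ, N ≤ n → enum (Sc ha c) n = -1 - (n:ℤ) :=
  enum_eventually (Sc_bddS ha c) ha (Sc_closed ha c)
    ((Finset.sum_congr rfl (fun i _ => cls_Sc ha c i)).trans hsum)

theorem fwd_sum {Y : YoungDiagram} {a : ℕ} (ha : 0 < a) (hA : Y.IsCore a) :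
    (∑ i : Fin a, cls (SY Y) (a:ℤ) ((i:ℕ):ℤ)) = 0 :=
  sum_cls_eq_zero (SY_bddS Y) ha ((isCore_iff Y ha).mp hA) (N := Y.colLen 0)
    (fun n hn => by rw [← enum_SY]; exact betaY_large Y hn)

theorem fwd_ineq {Y : YoungDiagram} {a b : ℕ} (ha : 0 < a) (hb : 0 < b)
    (hA : Y.IsCore a) (hB : Y.IsCore b) :
    ∀ i : Fin a, cls (SY Y) (a:ℤ) (((((i:ℕ) + b) % a : ℕ)) : ℤ)
      - cls (SY Y) (a:ℤ) ((i:ℕ):ℤ) ≤ ((b:ℤ) + (i:ℕ)) / a :=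
  (closed_b_iff (SY_bddS Y) ha ((isCore_iff Y ha).mp hA)).mp ((isCore_iff Y hb).mp hB)

theorem Sc_SY {Y : YoungDiagram} {a : ℕ} (ha : 0 < a) (hA : Y.IsCore a) :
    Sc ha (fun i : Fin a => cls (SY Y) (a:ℤ) ((i:ℕ):ℤ)) = SY Y := by
  funext x
  have hspec := (resFin_spec ha x).2
  have hchar := cls_char (SY_bddS Y) (by exact_mod_cast ha) ((isCore_iff Y ha).mp hA)
      ((resFin ha x : ℕ):ℤ) (x / a)
  rw [← hspec] at hchar
  simp only [Sc]
  exact propext hchar.symm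

theorem diag_eq_self {Y : YoungDiagram} {a : ℕ} (ha : 0 < a) (hA : Y.IsCore a)
    (hS2 : BddS (Sc ha (fun i : Fin a => cls (SY Y) (a:ℤ) ((i:ℕ):ℤ)))) {N : ℕ}
    (hev : ∀ n : ℕ, N ≤ n →
      enum (Sc ha (fun i : Fin a => cls (SY Y) (a:ℤ) ((i:ℕ):ℤ))) n = -1 - (n:ℤ)) :
    diagOfEnum _ hS2 hev = Y := by
  apply eq_of_rowLen_eq
  intro n
  have h2 := Sc_SY ha hA
  have h1 := rowLen_diagOfEnum hS2 hev n
  have h3 : enum (Sc ha (fun i : Fin a => cls (SY Y) (a:ℤ) ((i:ℕ):ℤ))) = enum (SY Y) := by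
    rw [h2]
  have h4 : enum (SY Y) = betaY Y := (enum_SY Y).symm
  have h5 : (Y.rowLen n : ℤ) = betaY Y n + 1 + n := by rw [betaY]; ring
  have h6 : ((diagOfEnum _ hS2 hev).rowLen n : ℤ) = (Y.rowLen n : ℤ) := by
    rw [h1, h3, h4, h5]
  exact_mod_cast h6

theorem diag_isCore_a {a : ℕ} (ha : 0 < a) (c : Fin a → ℤ)
    (hS2 : BddS (Sc ha c)) {N : ℕ}
    (hev : ∀ n : ℕ, N ≤ n → enum (Sc ha c) n = -1 - (n:ℤ)) :
    (diagOfEnum _ hS2 hev).IsCore a :=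
  (isCore_iff _ ha).mpr (by rw [SY_diagOfEnum hS2 hev]; exact Sc_closed ha c)

theorem diag_isCore_b {a b : ℕ} (ha : 0 < a) (hb : 0 < b) (c : Fin a → ℤ)
    (hineq : ∀ i : Fin a,
      c ⟨((i : ℕ) + b) % a, Nat.mod_lt _ ha⟩ - c i ≤ ((b : ℤ) + (i : ℕ)) / a)
    (hS2 : BddS (Sc ha c)) {N : ℕ}
    (hev : ∀ n : ℕ, N ≤ n → enum (Sc ha c) n = -1 - (n:ℤ)) :
    (diagOfEnum _ hS2 hev).IsCore b := by
  apply (isCore_iff _ hb).mpr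
  rw [SY_diagOfEnum hS2 hev]
  apply (closed_b_iff (Sc_bddS ha c) ha (Sc_closed ha c)).mpr
  intro i
  have e1 := cls_Sc ha c ⟨((i : ℕ) + b) % a, Nat.mod_lt _ ha⟩
  have e2 := cls_Sc ha c i
  rw [show ((⟨((i : ℕ) + b) % a, Nat.mod_lt _ ha⟩ : Fin a) : ℕ) = ((i:ℕ) + b) % a from rfl]
    at e1
  rw [e1, e2]
  exact hineq i

theorem cls_SY_diag {a : ℕ} (ha : 0 < a) (c : Fin a → ℤ)
    (hS2 : BddS (Sc ha c)) {N : ℕ}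
    (hev : ∀ n : ℕ, N ≤ n → enum (Sc ha c) n = -1 - (n:ℤ)) (i : Fin a) :
    cls (SY (diagOfEnum _ hS2 hev)) (a:ℤ) ((i:ℕ):ℤ) = c i := by
  rw [SY_diagOfEnum hS2 hev]
  exact cls_Sc ha c i

end JohnsonAux

/-- **Johnson's Lemma 23**: for relatively prime `a, b`, simultaneous
`(a,b)`-core partitions are in bijection with the integer points
`c = (c_0, ..., c_{a-1}) ∈ ℤ^a` with `Σ_i c_i = 0` and
`c_{(i+b) mod a} - c_i ≤ ⌊(b+i)/a⌋` for each `0 ≤ i ≤ a-1`. -/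
theorem ab_cores_equiv_lattice_points (a b : ℕ) (ha : 0 < a) (hb : 0 < b)
    (hab : Nat.Coprime a b) :
    Nonempty ({Y : YoungDiagram // Y.IsCore a ∧ Y.IsCore b} ≃
      {c : Fin a → ℤ // (∑ i, c i) = 0 ∧
        ∀ i : Fin a,
          c ⟨((i : ℕ) + b) % a, Nat.mod_lt _ ha⟩ - c i ≤ ((b : ℤ) + (i : ℕ)) / a}) := by
  open JohnsonAux in
  refine ⟨{
    toFun := fun Y => ⟨fun i : Fin a => cls (SY Y.1) (a:ℤ) ((i:ℕ):ℤ),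
      fwd_sum ha Y.2.1, fun i => fwd_ineq ha hb Y.2.1 Y.2.2 i⟩
    invFun := fun c => ⟨diagOfEnum (Sc ha c.1) (Sc_bddS ha c.1)
        (hevSc ha c.1 c.2.1).choose_spec,
      diag_isCore_a ha c.1 (Sc_bddS ha c.1) (hevSc ha c.1 c.2.1).choose_spec,
      diag_isCore_b ha hb c.1 c.2.2 (Sc_bddS ha c.1) (hevSc ha c.1 c.2.1).choose_spec⟩
    left_inv := fun Y => Subtype.ext (diag_eq_self ha Y.2.1
      (Sc_bddS ha (fun i : Fin a => cls (SY Y.1) (a:ℤ) ((i:ℕ):ℤ)))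
      (hevSc ha _ (fwd_sum ha Y.2.1)).choose_spec)
    right_inv := fun c => Subtype.ext (funext fun i => cls_SY_diag ha c.1 (Sc_bddS ha c.1)
      (hevSc ha c.1 c.2.1).choose_spec i) }⟩
end

section
/- For a fixed positive integer m ≥ 2 and genus g, numerical semigroups S containing m with genus g are in bijection with the lattice points (x_1,...,x_{m-1}) ∈ ℤ_{≥0}^{m-1} satisfying x_i + x_j ≥ x_{i+j} whenever i+j < m, x_i + x_j + 1 ≥ x_{i+j−m} whenever i+j > m (indices in {1,...,m−1}), together with Σ_i x_i = g. -/
/-- The set of natural numbers determined by Kunz coordinates `x`. -/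
def KS (m : ℕ) (x : Fin (m - 1) → ℕ) : Set ℕ :=
  {n | n % m = 0 ∨ ∃ i : Fin (m - 1), (i : ℕ) + 1 = n % m ∧ x i ≤ n / m}

/-- The Kunz coordinates of a set `S`. -/
noncomputable def KF (m : ℕ) (S : Set ℕ) (i : Fin (m - 1)) : ℕ :=
  sInf {q | m * q + ((i : ℕ) + 1) ∈ S}

section Aux

variable {m : ℕ} {S : Set ℕ}

lemma mul_mem_of (h0 : 0 ∈ S) (hadd : ∀ x ∈ S, ∀ y ∈ S, x + y ∈ S) (hmS : m ∈ S) :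
    ∀ k, m * k ∈ S := by
  intro k
  induction k with
  | zero => simpa using h0
  | succ n ih =>
      have := hadd _ ih _ hmS
      simpa [Nat.mul_succ] using this

lemma KF_nonempty (hfin : (Sᶜ).Finite) (hm1 : 0 < m) (c : ℕ) :
    {q | m * q + c ∈ S}.Nonempty := by
  by_contra hemp
  rw [Set.not_nonempty_iff_eq_empty] at hemp
  have hforall : ∀ q, m * q + c ∈ Sᶜ := by
    intro q
    have : q ∉ {q | m * q + c ∈ S} := by rw [hemp]; exact Set.notMem_empty q
    exact this
  have hinj : Function.Injective fun q => m * q + c := by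
    intro a b h
    simp only at h
    have := Nat.eq_of_mul_eq_mul_left hm1 (by omega : m * a = m * b)
    exact this
  exact (Set.infinite_of_injective_forall_mem hinj hforall) hfin

lemma KF_mem_iff (h0 : 0 ∈ S) (hadd : ∀ x ∈ S, ∀ y ∈ S, x + y ∈ S)
    (hfin : (Sᶜ).Finite) (hmS : m ∈ S) (hm1 : 0 < m) (i : Fin (m - 1)) (q : ℕ) :
    m * q + ((i : ℕ) + 1) ∈ S ↔ KF m S i ≤ q := by
  constructor
  · intro h
    exact Nat.sInf_le h
  · intro hle
    have hmem : m * KF m S i + ((i : ℕ) + 1) ∈ S :=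
      Nat.sInf_mem (KF_nonempty hfin hm1 _)
    have h2 : (m * KF m S i + ((i : ℕ) + 1)) + m * (q - KF m S i) ∈ S :=
      hadd _ hmem _ (mul_mem_of h0 hadd hmS _)
    have heq : (m * KF m S i + ((i : ℕ) + 1)) + m * (q - KF m S i)
        = m * q + ((i : ℕ) + 1) := by
      have : m * KF m S i + m * (q - KF m S i) = m * q := by
        rw [← Nat.mul_add]
        congr 1
        omega
      omega
    rwa [heq] at h2

lemma mod_div_eq (hm1 : 0 < m) (Q c : ℕ) (hc : c < m) :
    (m * Q + c) % m = c ∧ (m * Q + c) / m = Q := by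
  constructor
  · rw [Nat.mul_add_mod]; exact Nat.mod_eq_of_lt hc
  · rw [Nat.mul_add_div hm1, Nat.div_eq_of_lt hc, add_zero]

lemma fin_lt (i : Fin (m - 1)) : (i : ℕ) + 1 < m := by
  have := i.isLt; omega

lemma mem_KS_idx (hm1 : 0 < m) {x : Fin (m - 1) → ℕ} (Q : ℕ) (i : Fin (m - 1))
    (h : x i ≤ Q) : m * Q + ((i : ℕ) + 1) ∈ KS m x := by
  obtain ⟨h1, h2⟩ := mod_div_eq hm1 Q ((i : ℕ) + 1) (fin_lt i)
  exact Or.inr ⟨i, by rw [h1], by rw [h2]; exact h⟩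

lemma mem_KS_mul (x : Fin (m - 1) → ℕ) (Q : ℕ) : m * Q ∈ KS m x :=
  Or.inl (Nat.mul_mod_right m Q)

/-- Characterization of membership of `m*Q + (i+1)` in `KS m x`. -/
lemma mem_KS_iff (hm1 : 0 < m) (x : Fin (m - 1) → ℕ) (Q : ℕ) (i : Fin (m - 1)) :
    m * Q + ((i : ℕ) + 1) ∈ KS m x ↔ x i ≤ Q := by
  obtain ⟨h1, h2⟩ := mod_div_eq hm1 Q ((i : ℕ) + 1) (fin_lt i)
  constructor
  · rintro (h | ⟨j, hj1, hj2⟩)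
    · rw [h1] at h; omega
    · rw [h1] at hj1
      have : j = i := by
        apply Fin.ext; omega
      rw [h2] at hj2
      rwa [this] at hj2
  · intro h
    exact mem_KS_idx hm1 Q i h

lemma KF_KS (hm1 : 0 < m) (x : Fin (m - 1) → ℕ) : KF m (KS m x) = x := by
  funext i
  have hset : {q | m * q + ((i : ℕ) + 1) ∈ KS m x} = {q | x i ≤ q} := by
    ext q
    exact mem_KS_iff hm1 x q i
  unfold KF
  rw [hset]
  apply le_antisymm
  · exact Nat.sInf_le (le_refl (x i))
  · exact Nat.sInf_mem (⟨x i, by simp⟩ : {q | x i ≤ q}.Nonempty)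

lemma KS_KF (h0 : 0 ∈ S) (hadd : ∀ x ∈ S, ∀ y ∈ S, x + y ∈ S)
    (hfin : (Sᶜ).Finite) (hmS : m ∈ S) (hm1 : 0 < m) :
    KS m (KF m S) = S := by
  ext n
  have hdm : m * (n / m) + n % m = n := Nat.div_add_mod n m
  constructor
  · rintro (h | ⟨i, hi1, hi2⟩)
    · have : n = m * (n / m) := by omega
      rw [this]
      exact mul_mem_of h0 hadd hmS _
    · have : n = m * (n / m) + ((i : ℕ) + 1) := by omega
      rw [this]
      exact (KF_mem_iff h0 hadd hfin hmS hm1 i _).2 hi2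
  · intro hn
    by_cases h : n % m = 0
    · exact Or.inl h
    · have hlt : n % m < m := Nat.mod_lt n hm1
      refine Or.inr ⟨⟨n % m - 1, by omega⟩, by simp; omega, ?_⟩
      have heq : n = m * (n / m) + ((n % m - 1) + 1) := by omega
      apply (KF_mem_iff h0 hadd hfin hmS hm1 ⟨n % m - 1, by omega⟩ (n / m)).1
      show m * (n / m) + ((n % m - 1) + 1) ∈ S
      rw [← heq]
      exact hn

lemma KS_compl_eq (hm1 : 0 < m) (x : Fin (m - 1) → ℕ) :
    (KS m x)ᶜ = ↑(Finset.univ.biUnion fun i : Fin (m - 1) =>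
      (Finset.range (x i)).image fun q => m * q + ((i : ℕ) + 1)) := by
  ext n
  simp only [Finset.coe_biUnion, Finset.coe_univ, Set.mem_iUnion, Finset.coe_image,
    Finset.coe_range, Set.mem_image, Set.mem_Iio, Set.mem_compl_iff, Set.mem_univ,
    Set.iUnion_true]
  constructor
  · intro hn
    have hn' : ¬ (n % m = 0 ∨ ∃ i : Fin (m - 1), (i : ℕ) + 1 = n % m ∧ x i ≤ n / m) := hn
    push_neg at hn'
    obtain ⟨h0, hfa⟩ := hn'
    have hlt : n % m < m := Nat.mod_lt n hm1
    refine ⟨⟨n % m - 1, by omega⟩, n / m, ?_, ?_⟩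
    · have := hfa ⟨n % m - 1, by omega⟩ (by simp; omega)
      omega
    · have := Nat.div_add_mod n m
      show m * (n / m) + ((n % m - 1) + 1) = n
      omega
  · rintro ⟨i, q, hq, rfl⟩
    rw [mem_KS_iff hm1 x q i]
    omega

lemma KS_compl_finite (hm1 : 0 < m) (x : Fin (m - 1) → ℕ) : ((KS m x)ᶜ).Finite := by
  rw [KS_compl_eq hm1 x]
  exact Finset.finite_toSet _

lemma KS_compl_ncard (hm1 : 0 < m) (x : Fin (m - 1) → ℕ) :
    ((KS m x)ᶜ).ncard = ∑ i, x i := by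
  classical
  rw [KS_compl_eq hm1 x, Set.ncard_coe_finset]
  rw [Finset.card_biUnion]
  · apply Finset.sum_congr rfl
    intro i _
    rw [Finset.card_image_of_injective, Finset.card_range]
    intro a b h
    simp only at h
    exact Nat.eq_of_mul_eq_mul_left hm1 (by omega)
  · intro i _ j _ hij
    simp only [Finset.disjoint_left, Finset.mem_image, Finset.mem_range]
    rintro a ⟨q, hq, rfl⟩ ⟨q', hq', he⟩
    have h1 : (m * q + ((i : ℕ) + 1)) % m = (i : ℕ) + 1 :=
      (mod_div_eq hm1 q _ (fin_lt i)).1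
    have h2 : (m * q' + ((j : ℕ) + 1)) % m = (j : ℕ) + 1 :=
      (mod_div_eq hm1 q' _ (fin_lt j)).1
    rw [he] at h2
    rw [h1] at h2
    exact hij (Fin.ext (by omega))

lemma sum_aux (M A B u v w : ℕ) (h : u + v = w) :
    (M * A + u) + (M * B + v) = M * (A + B) + w := by
  subst h; ring

lemma KS_add (hm1 : 0 < m) (x : Fin (m - 1) → ℕ)
    (h1 : ∀ i j k : Fin (m - 1),
      ((i : ℕ) + 1) + ((j : ℕ) + 1) = (k : ℕ) + 1 → x k ≤ x i + x j)
    (h2 : ∀ i j k : Fin (m - 1),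
      ((i : ℕ) + 1) + ((j : ℕ) + 1) = ((k : ℕ) + 1) + m → x k ≤ x i + x j + 1) :
    ∀ a ∈ KS m x, ∀ b ∈ KS m x, a + b ∈ KS m x := by
  intro a ha b hb
  have hda := Nat.div_add_mod a m
  have hdb := Nat.div_add_mod b m
  rcases ha with ha0 | ⟨i, hi1, hi2⟩ <;> rcases hb with hb0 | ⟨j, hj1, hj2⟩
  · -- both multiples of m
    have : a + b = m * (a / m + b / m) := by rw [Nat.mul_add]; omega
    rw [this]; exact mem_KS_mul x _
  · have : a + b = m * (a / m + b / m) + ((j : ℕ) + 1) := by rw [Nat.mul_add]; omega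
    rw [this]; exact mem_KS_idx hm1 _ j (le_trans hj2 (Nat.le_add_left _ _))
  · have : a + b = m * (a / m + b / m) + ((i : ℕ) + 1) := by rw [Nat.mul_add]; omega
    rw [this]; exact mem_KS_idx hm1 _ i (le_trans hi2 (Nat.le_add_right _ _))
  · have hea : a = m * (a / m) + ((i : ℕ) + 1) := by omega
    have heb : b = m * (b / m) + ((j : ℕ) + 1) := by omega
    have hilt := fin_lt i
    have hjlt := fin_lt j
    have base : a + b = m * (a / m + b / m) + (((i : ℕ) + 1) + ((j : ℕ) + 1)) := by
      conv_lhs => rw [hea, heb]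
      ring
    rcases lt_trichotomy (((i : ℕ) + 1) + ((j : ℕ) + 1)) m with hr | hr | hr
    · -- i+j+2 < m
      have hk : (i : ℕ) + (j : ℕ) + 1 < m - 1 := by omega
      have hki : ((i : ℕ) + 1) + ((j : ℕ) + 1)
          = ((⟨(i : ℕ) + (j : ℕ) + 1, hk⟩ : Fin (m - 1)) : ℕ) + 1 := by
        show ((i : ℕ) + 1) + ((j : ℕ) + 1) = ((i : ℕ) + (j : ℕ) + 1) + 1
        omega
      have hsum : a + b
          = m * (a / m + b / m) + (((⟨(i : ℕ) + (j : ℕ) + 1, hk⟩ : Fin (m - 1)) : ℕ) + 1) := by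
        rw [base, hki]
      rw [hsum]
      exact mem_KS_idx hm1 _ _
        (le_trans (h1 i j ⟨(i : ℕ) + (j : ℕ) + 1, hk⟩ hki) (Nat.add_le_add hi2 hj2))
    · -- i+j+2 = m
      have hsum : a + b = m * (a / m + b / m + 1) := by
        rw [base, hr]; ring
      rw [hsum]; exact mem_KS_mul x _
    · -- i+j+2 > m
      have hk : (i : ℕ) + (j : ℕ) + 1 - m < m - 1 := by omega
      have hkk : ((i : ℕ) + 1) + ((j : ℕ) + 1)
          = (((⟨(i : ℕ) + (j : ℕ) + 1 - m, hk⟩ : Fin (m - 1)) : ℕ) + 1) + m := by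
        show ((i : ℕ) + 1) + ((j : ℕ) + 1) = (((i : ℕ) + (j : ℕ) + 1 - m) + 1) + m
        omega
      have hsum : a + b
          = m * (a / m + b / m + 1)
            + (((⟨(i : ℕ) + (j : ℕ) + 1 - m, hk⟩ : Fin (m - 1)) : ℕ) + 1) := by
        rw [base, hkk]; ring
      rw [hsum]
      exact mem_KS_idx hm1 _ _
        (le_trans (h2 i j ⟨(i : ℕ) + (j : ℕ) + 1 - m, hk⟩ hkk)
          (Nat.add_le_add (Nat.add_le_add hi2 hj2) le_rfl))

lemma KF_cond1 (h0 : 0 ∈ S) (hadd : ∀ x ∈ S, ∀ y ∈ S, x + y ∈ S)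
    (hfin : (Sᶜ).Finite) (hmS : m ∈ S) (hm1 : 0 < m) :
    ∀ i j k : Fin (m - 1),
      ((i : ℕ) + 1) + ((j : ℕ) + 1) = (k : ℕ) + 1 → KF m S k ≤ KF m S i + KF m S j := by
  intro i j k hijk
  have hi : m * KF m S i + ((i : ℕ) + 1) ∈ S := Nat.sInf_mem (KF_nonempty hfin hm1 _)
  have hj : m * KF m S j + ((j : ℕ) + 1) ∈ S := Nat.sInf_mem (KF_nonempty hfin hm1 _)
  have hsum := hadd _ hi _ hj
  have heq : (m * KF m S i + ((i : ℕ) + 1)) + (m * KF m S j + ((j : ℕ) + 1))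
      = m * (KF m S i + KF m S j) + ((k : ℕ) + 1) := sum_aux _ _ _ _ _ _ hijk
  rw [heq] at hsum
  exact (KF_mem_iff h0 hadd hfin hmS hm1 k _).1 hsum

lemma KF_cond2 (h0 : 0 ∈ S) (hadd : ∀ x ∈ S, ∀ y ∈ S, x + y ∈ S)
    (hfin : (Sᶜ).Finite) (hmS : m ∈ S) (hm1 : 0 < m) :
    ∀ i j k : Fin (m - 1),
      ((i : ℕ) + 1) + ((j : ℕ) + 1) = ((k : ℕ) + 1) + m →
        KF m S k ≤ KF m S i + KF m S j + 1 := by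
  intro i j k hijk
  have hi : m * KF m S i + ((i : ℕ) + 1) ∈ S := Nat.sInf_mem (KF_nonempty hfin hm1 _)
  have hj : m * KF m S j + ((j : ℕ) + 1) ∈ S := Nat.sInf_mem (KF_nonempty hfin hm1 _)
  have hsum := hadd _ hi _ hj
  have heq : (m * KF m S i + ((i : ℕ) + 1)) + (m * KF m S j + ((j : ℕ) + 1))
      = m * (KF m S i + KF m S j + 1) + ((k : ℕ) + 1) := by
    have := sum_aux m (KF m S i) (KF m S j) ((i : ℕ) + 1) ((j : ℕ) + 1)
      (((k : ℕ) + 1) + m) hijk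
    rw [this]; ring
  rw [heq] at hsum
  exact (KF_mem_iff h0 hadd hfin hmS hm1 k _).1 hsum

end Aux

/-- **Kunz coordinates**: for `m ≥ 2`, numerical semigroups containing `m`
with genus `g` are in bijection with the lattice points
`(x_1, ..., x_{m-1}) ∈ ℤ_{≥0}^{m-1}` of the Kunz polyhedron satisfying
`x_i + x_j ≥ x_{i+j}` when `i+j < m`, `x_i + x_j + 1 ≥ x_{i+j-m}` when
`i+j > m`, together with `Σ_i x_i = g`. (Coordinate `i ∈ {1,...,m-1}` is
represented by the index `i-1` of `Fin (m-1)`.) -/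
theorem kunz_coordinates_bijection (m g : ℕ) (hm : 2 ≤ m) :
    Nonempty
      ({S : Set ℕ // 0 ∈ S ∧ (∀ x ∈ S, ∀ y ∈ S, x + y ∈ S) ∧ (Sᶜ).Finite ∧
          m ∈ S ∧ (Sᶜ).ncard = g} ≃
        {x : Fin (m - 1) → ℕ //
          (∀ i j k : Fin (m - 1),
            ((i : ℕ) + 1) + ((j : ℕ) + 1) = (k : ℕ) + 1 → x k ≤ x i + x j) ∧
          (∀ i j k : Fin (m - 1),
            ((i : ℕ) + 1) + ((j : ℕ) + 1) = ((k : ℕ) + 1) + m → x k ≤ x i + x j + 1) ∧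
          ∑ i, x i = g}) := by
  have hm1 : 0 < m := by omega
  refine ⟨{
    toFun := fun S =>
      ⟨KF m S.1,
        KF_cond1 S.2.1 S.2.2.1 S.2.2.2.1 S.2.2.2.2.1 hm1,
        KF_cond2 S.2.1 S.2.2.1 S.2.2.2.1 S.2.2.2.2.1 hm1, ?_⟩
    invFun := fun x =>
      ⟨KS m x.1, ?_, KS_add hm1 x.1 x.2.1 x.2.2.1, KS_compl_finite hm1 x.1, ?_, ?_⟩
    left_inv := ?_
    right_inv := ?_ }⟩
  · -- sum of KF = g
    obtain ⟨S, h0, hadd, hfin, hmS, hg⟩ := S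
    have := KS_compl_ncard hm1 (KF m S)
    rw [KS_KF h0 hadd hfin hmS hm1] at this
    simp only
    rw [← this, hg]
  · -- 0 ∈ KS
    exact Or.inl (Nat.zero_mod m)
  · -- m ∈ KS
    exact Or.inl (Nat.mod_self m)
  · -- ncard = g
    rw [KS_compl_ncard hm1 x.1]
    exact x.2.2.2
  · -- left inverse
    rintro ⟨S, h0, hadd, hfin, hmS, hg⟩
    apply Subtype.ext
    exact KS_KF h0 hadd hfin hmS hm1
  · -- right inverse
    rintro ⟨x, hx⟩
    apply Subtype.ext
    exact KF_KS hm1 x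
end
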